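/- Let Ψ : ℝ² → ℝ be a smooth function of (t,u) with Ψ_u nowhere zero satisfying Ψ_t = Ψ_{uu}/Ψ_u². Let F : ℝ² → ℝ be smooth and satisfy F(t, Ψ(t,u)) = u for all (t,u). Then F satisfies the linear heat equation, i.e. F_t(t,y) = F_{yy}(t,y), at every point of the form (t,y) = (t, Ψ(t,u)). -/

import Mathlib

/-- Partial derivative with respect to the first variable. -/
noncomputable def Dt (u : ℝ → ℝ → ℝ) : ℝ → ℝ → ℝ := fun t x => deriv (fun s => u s x) t

/-- Partial derivative with respect to the second variable. -/
noncomputable def Dx (u : ℝ → ℝ → ℝ) : ℝ → ℝ → ℝ := fun t x => deriv (fun y => u t y) x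

/-- Smoothness of a function of two real variables. -/
def Smooth2 (u : ℝ → ℝ → ℝ) : Prop := ContDiff ℝ (⊤ : ℕ∞) (fun p : ℝ × ℝ => u p.1 p.2)

private lemma hasDerivAt_comp2 {F : ℝ → ℝ → ℝ} (hF : Smooth2 F)
    {g h : ℝ → ℝ} {g' h' : ℝ} {v : ℝ}
    (hg : HasDerivAt g g' v) (hh : HasDerivAt h h' v) :
    HasDerivAt (fun s => F (g s) (h s))
      (fderiv ℝ (fun p : ℝ × ℝ => F p.1 p.2) (g v, h v) (g', h')) v := by
  have hd := ((hF.differentiable (by simp)) (g v, h v)).hasFDerivAt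
  exact hd.comp_hasDerivAt v (hg.prodMk hh)

private lemma clm_pair (L : ℝ × ℝ →L[ℝ] ℝ) (a b : ℝ) :
    L (a, b) = a * L (1, 0) + b * L (0, 1) := by
  have : (a, b) = a • ((1 : ℝ), (0 : ℝ)) + b • ((0 : ℝ), (1 : ℝ)) := by
    simp [Prod.ext_iff]
  rw [this, map_add, map_smul, map_smul, smul_eq_mul, smul_eq_mul]

private lemma Dt_eq_fderiv {F : ℝ → ℝ → ℝ} (hF : Smooth2 F) (t x : ℝ) :
    Dt F t x = fderiv ℝ (fun p : ℝ × ℝ => F p.1 p.2) (t, x) (1, 0) := by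
  have h : HasDerivAt (fun s => F s x)
      (fderiv ℝ (fun p : ℝ × ℝ => F p.1 p.2) (t, x) (1, 0)) t :=
    hasDerivAt_comp2 hF (hasDerivAt_id t) (hasDerivAt_const t x)
  exact h.deriv

private lemma Dx_eq_fderiv {F : ℝ → ℝ → ℝ} (hF : Smooth2 F) (t x : ℝ) :
    Dx F t x = fderiv ℝ (fun p : ℝ × ℝ => F p.1 p.2) (t, x) (0, 1) := by
  have h : HasDerivAt (fun y => F t y)
      (fderiv ℝ (fun p : ℝ × ℝ => F p.1 p.2) (t, x) (0, 1)) x :=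
    hasDerivAt_comp2 hF (hasDerivAt_const x t) (hasDerivAt_id x)
  exact h.deriv

private lemma hasDerivAt_slice_t {F : ℝ → ℝ → ℝ} (hF : Smooth2 F) (t x : ℝ) :
    HasDerivAt (fun s => F s x) (Dt F t x) t := by
  have h : HasDerivAt (fun s => F s x)
      (fderiv ℝ (fun p : ℝ × ℝ => F p.1 p.2) (t, x) (1, 0)) t :=
    hasDerivAt_comp2 hF (hasDerivAt_id t) (hasDerivAt_const t x)
  rw [Dt_eq_fderiv hF]
  exact h

private lemma hasDerivAt_slice_x {F : ℝ → ℝ → ℝ} (hF : Smooth2 F) (t x : ℝ) :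
    HasDerivAt (fun y => F t y) (Dx F t x) x := by
  have h : HasDerivAt (fun y => F t y)
      (fderiv ℝ (fun p : ℝ × ℝ => F p.1 p.2) (t, x) (0, 1)) x :=
    hasDerivAt_comp2 hF (hasDerivAt_const x t) (hasDerivAt_id x)
  rw [Dx_eq_fderiv hF]
  exact h

private lemma smooth2_Dx {F : ℝ → ℝ → ℝ} (hF : Smooth2 F) : Smooth2 (Dx F) := by
  have heq : (fun p : ℝ × ℝ => Dx F p.1 p.2)
      = fun p : ℝ × ℝ => fderiv ℝ (fun q : ℝ × ℝ => F q.1 q.2) p (0, 1) := by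
    funext p
    exact Dx_eq_fderiv hF p.1 p.2
  rw [Smooth2, heq]
  exact (hF.fderiv_right (by simp)).clm_apply contDiff_const

theorem stmt_13 (Ψ : ℝ → ℝ → ℝ) (hΨ : Smooth2 Ψ)
    (hΨu0 : ∀ t u, Dx Ψ t u ≠ 0)
    (hΨeq : ∀ t u, Dt Ψ t u = Dx (Dx Ψ) t u / (Dx Ψ t u) ^ 2)
    (F : ℝ → ℝ → ℝ) (hF : Smooth2 F)
    (hFinv : ∀ t u, F t (Ψ t u) = u) :
    ∀ t u, Dt F t (Ψ t u) = Dx (Dx F) t (Ψ t u) := by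
  intro t u
  set y := Ψ t u with hy
  have hG : Smooth2 (Dx F) := smooth2_Dx hF
  have hH : Smooth2 (Dx Ψ) := smooth2_Dx hΨ
  have hb : Dx Ψ t u ≠ 0 := hΨu0 t u
  -- abbreviations
  set a := Dt Ψ t u with hadf
  set b := Dx Ψ t u with hbdf
  set c := Dx (Dx Ψ) t u with hcdf
  -- Identity 1: F_t + a F_y = 0 at (t, y)
  have hD1 : HasDerivAt (fun s => F s (Ψ s u))
      (fderiv ℝ (fun p : ℝ × ℝ => F p.1 p.2) (t, y) (1, a)) t :=
    hasDerivAt_comp2 hF (hasDerivAt_id t) (hasDerivAt_slice_t hΨ t u)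
  have hfun1 : (fun s => F s (Ψ s u)) = fun _ => u := funext fun s => hFinv s u
  rw [hfun1] at hD1
  have e1 : fderiv ℝ (fun p : ℝ × ℝ => F p.1 p.2) (t, y) (1, a) = 0 :=
    hD1.unique (hasDerivAt_const t u)
  rw [clm_pair, ← Dt_eq_fderiv hF, ← Dx_eq_fderiv hF] at e1
  -- Identity 2 (as a function of v): F_y(t, Ψ t v) * Ψ_u(t, v) = 1
  have e2 : ∀ v : ℝ, Dx F t (Ψ t v) * Dx Ψ t v = 1 := by
    intro v
    have hD2 : HasDerivAt (fun w => F t (Ψ t w))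
        (fderiv ℝ (fun p : ℝ × ℝ => F p.1 p.2) (t, Ψ t v) (0, Dx Ψ t v)) v :=
      hasDerivAt_comp2 hF (hasDerivAt_const v t) (hasDerivAt_slice_x hΨ t v)
    have hfun2 : (fun w => F t (Ψ t w)) = fun w => w := funext fun w => hFinv t w
    rw [hfun2] at hD2
    have := hD2.unique (hasDerivAt_id' v)
    rw [clm_pair, ← Dt_eq_fderiv hF, ← Dx_eq_fderiv hF] at this
    linarith [this]
  -- Identity 3: differentiate identity 2 in v at v = u
  have hD3a : HasDerivAt (fun v => Dx F t (Ψ t v))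
      (fderiv ℝ (fun p : ℝ × ℝ => Dx F p.1 p.2) (t, y) (0, b)) u :=
    hasDerivAt_comp2 hG (hasDerivAt_const u t) (hasDerivAt_slice_x hΨ t u)
  have hD3b : HasDerivAt (fun v => Dx Ψ t v) c u := hasDerivAt_slice_x hH t u
  have hD3 : HasDerivAt (fun v => Dx F t (Ψ t v) * Dx Ψ t v) _ u := hD3a.mul hD3b
  have hfun3 : (fun v => Dx F t (Ψ t v) * Dx Ψ t v) = fun _ => (1 : ℝ) :=
    funext fun v => e2 v
  rw [hfun3] at hD3
  have e3 := hD3.unique (hasDerivAt_const u 1)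
  rw [clm_pair, ← Dt_eq_fderiv hG, ← Dx_eq_fderiv hG] at e3
  -- Algebra
  have ha : a * b ^ 2 = c := by
    rw [hadf, hΨeq t u, ← hbdf, ← hcdf]
    field_simp
  set p := Dt F t y
  set q := Dx F t y
  set r := Dx (Dx F) t y
  -- e1 : 1 * p + a * q = 0
  -- e3 : (0 * Dt (Dx F) t y + b * r) * b + q * c = 0
  have e1' : p + a * q = 0 := by linarith [e1]
  have e3' : b * r * b + q * c = 0 := by
    have := e3
    nlinarith [this]
  have key : p * b ^ 2 = r * b ^ 2 := by
    linear_combination b ^ 2 * e1' + (-q) * ha + (-1) * e3'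
  exact mul_right_cancel₀ (pow_ne_zero 2 hb) key
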